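/- arXiv:2006.11805 — 5 statements merged into one kernel-verified Lean document; each statement's English description precedes it below -/
import Mathlib

section
/- Let F be a field, u, v a non-commuting pair in H(F), Δ = u1·v2 − u2·v1, and α, β, γ ∈ F. Set x = h(0,0,αΔ), y = h(0,0,βΔ), z = h(0,0,γΔ). Then α·β = γ if and only if there exist x', y' in H(F) such that [x',u] = 1, [y',v] = 1, [x',v] = x, [u,y'] = y, and [x',y'] = z. -/
/-- The Heisenberg group over a field `F`: 3×3 upper unitriangular matrices,
represented by their entries `a` at (1,2), `b` at (2,3), `c` at (1,3),
with multiplication induced by matrix multiplication. -/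
@[ext] structure Heis (F : Type*) [Field F] where
  a : F
  b : F
  c : F

namespace Heis

variable {F : Type*} [Field F]

instance : Mul (Heis F) := ⟨fun x y => ⟨x.a + y.a, x.b + y.b, x.c + y.c + x.a * y.b⟩⟩
instance : One (Heis F) := ⟨⟨0, 0, 0⟩⟩
instance : Inv (Heis F) := ⟨fun x => ⟨-x.a, -x.b, x.a * x.b - x.c⟩⟩

@[simp] theorem mul_a (x y : Heis F) : (x * y).a = x.a + y.a := rfl
@[simp] theorem mul_b (x y : Heis F) : (x * y).b = x.b + y.b := rfl
@[simp] theorem mul_c (x y : Heis F) : (x * y).c = x.c + y.c + x.a * y.b := rfl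
@[simp] theorem one_a : (1 : Heis F).a = 0 := rfl
@[simp] theorem one_b : (1 : Heis F).b = 0 := rfl
@[simp] theorem one_c : (1 : Heis F).c = 0 := rfl
@[simp] theorem inv_a (x : Heis F) : (x⁻¹).a = -x.a := rfl
@[simp] theorem inv_b (x : Heis F) : (x⁻¹).b = -x.b := rfl
@[simp] theorem inv_c (x : Heis F) : (x⁻¹).c = x.a * x.b - x.c := rfl

instance : Group (Heis F) where
  mul_assoc x y z := by ext <;> simp <;> ring
  one_mul x := by ext <;> simp
  mul_one x := by ext <;> simp
  inv_mul_cancel x := by ext <;> simp <;> ring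

/-- `h a b c` is the unitriangular matrix with superdiagonal entries `a`, `b`
and corner entry `c`. -/
def h (a b c : F) : Heis F := ⟨a, b, c⟩

/-- `Δ u v = u₁v₂ - u₂v₁`. -/
def Δ (u v : Heis F) : F := u.a * v.b - u.b * v.a

end Heis


namespace Heis

variable {F : Type*} [Field F]

/-- Maltsev's multiplication relation on the center, with parameters `u`, `v`:
`MulR u v x y z` holds iff there exist `x'`, `y'` with `[x',u] = [y',v] = 1`,
`[x',v] = x`, `[u,y'] = y`, and `[x',y'] = z`. -/
def MulR (u v x y z : Heis F) : Prop :=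
  ∃ x' y' : Heis F,
    x'⁻¹ * u⁻¹ * x' * u = 1 ∧
    y'⁻¹ * v⁻¹ * y' * v = 1 ∧
    x'⁻¹ * v⁻¹ * x' * v = x ∧
    u⁻¹ * y'⁻¹ * u * y' = y ∧
    x'⁻¹ * y'⁻¹ * x' * y' = z

/-- `g u v : F → Z(H(F))`, the map `α ↦ h 0 0 (α·Δ u v)`. -/
def g (u v : Heis F) (α : F) : Heis F := h 0 0 (α * Δ u v)

/-- The canonical isomorphism `f_{(u,v),(u',v')} = g_{(u',v')} ∘ g_{(u,v)}⁻¹`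
between the Maltsev copies of `F` (for `x` in the center, `g_{(u,v)}⁻¹ x = x.c / Δ u v`). -/
def f (u v u' v' : Heis F) (x : Heis F) : Heis F := g u' v' (x.c / Δ u v)

end Heis

open Heis
/-- Maltsev's definition of multiplication: with `x = h 0 0 (αΔ)`,
`y = h 0 0 (βΔ)`, `z = h 0 0 (γΔ)`, we have `αβ = γ` iff there exist
`x'`, `y'` with `[x',u] = 1`, `[y',v] = 1`, `[x',v] = x`, `[u,y'] = y`,
`[x',y'] = z`. -/
theorem heis_maltsev_mul (F : Type*) [Field F] (u v : Heis F)
    (huv : u * v ≠ v * u) (α β γ : F) :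
    α * β = γ ↔
      ∃ x' y' : Heis F,
        x'⁻¹ * u⁻¹ * x' * u = 1 ∧
        y'⁻¹ * v⁻¹ * y' * v = 1 ∧
        x'⁻¹ * v⁻¹ * x' * v = h 0 0 (α * Δ u v) ∧
        u⁻¹ * y'⁻¹ * u * y' = h 0 0 (β * Δ u v) ∧
        x'⁻¹ * y'⁻¹ * x' * y' = h 0 0 (γ * Δ u v) := by
  have hΔ : Δ u v ≠ 0 := by
    intro hd
    apply huv
    ext
    · simp [add_comm]
    · simp [add_comm]
    · simp only [mul_c]
      simp only [Δ] at hd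
      linear_combination hd
  constructor
  · intro hγ
    subst hγ
    refine ⟨⟨α * u.a, α * u.b, 0⟩, ⟨β * v.a, β * v.b, 0⟩, ?_, ?_, ?_, ?_, ?_⟩ <;>
      ext <;> simp [Heis.h, Δ] <;> ring
  · rintro ⟨x', y', e1, e2, e3, e4, e5⟩
    have c1 := congrArg Heis.c e1
    have c3 := congrArg Heis.c e3
    have c4 := congrArg Heis.c e4
    have c5 := congrArg Heis.c e5
    simp [Heis.h, Δ] at c1 c3 c4 c5
    have A : x'.a * u.b - u.a * x'.b = 0 := by linear_combination c1
    have C : x'.a * v.b - v.a * x'.b = α * (u.a * v.b - u.b * v.a) := by linear_combination c3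
    have D4 : u.a * y'.b - u.b * y'.a = β * (u.a * v.b - u.b * v.a) := by linear_combination c4
    have E : x'.a * y'.b - y'.a * x'.b = γ * (u.a * v.b - u.b * v.a) := by linear_combination c5
    have key : α * β * Δ u v * Δ u v = γ * Δ u v * Δ u v := by
      simp only [Δ]
      linear_combination (-(u.a * y'.b - u.b * y'.a)) * C +
        (-(α * (u.a * v.b - u.b * v.a))) * D4 +
        (-(v.b * y'.a - y'.b * v.a)) * A + (u.a * v.b - u.b * v.a) * E
    exact mul_right_cancel₀ hΔ (mul_right_cancel₀ hΔ key)
end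

section
/- Let F be a field, and (u,v) a non-commuting pair in H(F) with Δ = u1·v2 − u2·v1. Define ⊗ on Z(H(F)) by: x ⊗ y = z iff there exist x', y' with [x',u] = [y',v] = 1, [x',v] = x, [u,y'] = y, and [x',y'] = z. Then ⊗ is a well-defined binary operation on Z(H(F)), and the map α ↦ h(0,0,α·Δ) is a field isomorphism from F onto (Z(H(F)), ·, ⊗), where · is matrix multiplication as addition. -/
/-! Every commutator in `H(F)` is central: `[p, q] = h 0 0 (Δ p q)`, with `Δ` the symplectic form
on the superdiagonal entries, and `Δ u v ≠ 0` because `u`, `v` do not commute. For `x = h 0 0 (α Δ)`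
and `y = h 0 0 (β Δ)` the conditions on `x'`, `y'` thus read `Δ x' u = 0`, `Δ x' v = α Δ`,
`Δ u y' = β Δ`, and the Plücker relation
`Δ x' y' · Δ u v = Δ x' u · Δ y' v + Δ x' v · Δ u y'` forces `Δ x' y' = α β Δ`; the multiples
`x' = α u`, `y' = β v` realise it. So `⊗` transports multiplication of `F` along `α ↦ h 0 0 (α Δ)`,
which is additive and bijective onto the center `{a = b = 0}`. -/

namespace Heis

variable {F : Type*} [Field F]

@[simp] theorem h_a (a b c : F) : (h a b c).a = a := rfl
@[simp] theorem h_b (a b c : F) : (h a b c).b = b := rfl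
@[simp] theorem h_c (a b c : F) : (h a b c).c = c := rfl

theorem one_eq_h : (1 : Heis F) = h 0 0 0 := rfl

theorem h_zero_zero_inj {c c' : F} : h 0 0 c = h 0 0 c' ↔ c = c' := by
  simp [Heis.ext_iff]

theorem commutator_eq (p q : Heis F) : p⁻¹ * q⁻¹ * p * q = h 0 0 (Δ p q) := by
  ext <;> simp only [mul_a, mul_b, mul_c, inv_a, inv_b, inv_c, h_a, h_b, h_c, Δ] <;> ring

theorem mem_center_iff {x : Heis F} : x ∈ Subgroup.center (Heis F) ↔ x.a = 0 ∧ x.b = 0 := by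
  rw [Subgroup.mem_center_iff]
  constructor
  · intro hx
    have h1 := congrArg Heis.c (hx (h 0 1 0))
    have h2 := congrArg Heis.c (hx (h 1 0 0))
    simp only [mul_c, h_a, h_b, h_c] at h1 h2
    exact ⟨by linear_combination -h1, by linear_combination h2⟩
  · rintro ⟨ha, hb⟩ y
    ext <;> simp only [mul_a, mul_b, mul_c, ha, hb] <;> ring

theorem mul_comm_iff_Δ_eq_zero {u v : Heis F} : u * v = v * u ↔ Δ u v = 0 := by
  simp only [Heis.ext_iff, mul_a, mul_b, mul_c, Δ, add_comm u.a, add_comm u.b, true_and]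
  constructor <;> intro h <;> linear_combination h

theorem Δ_mul_Δ_eq (x y u v : Heis F) : Δ x y * Δ u v = Δ x u * Δ y v + Δ x v * Δ u y := by
  unfold Δ; ring

theorem mulR_g_g_iff (u v : Heis F) (α β : F) (z : Heis F) :
    MulR u v (g u v α) (g u v β) z ↔ ∃ x' y' : Heis F, Δ x' u = 0 ∧ Δ y' v = 0 ∧
      Δ x' v = α * Δ u v ∧ Δ u y' = β * Δ u v ∧ h 0 0 (Δ x' y') = z := by
  simp only [MulR, commutator_eq, one_eq_h, g, h_zero_zero_inj]

theorem mulR_g_g (u v : Heis F) (α β : F) : MulR u v (g u v α) (g u v β) (g u v (α * β)) := by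
  refine (mulR_g_g_iff u v α β _).2
    ⟨h (α * u.a) (α * u.b) 0, h (β * v.a) (β * v.b) 0, ?_, ?_, ?_, ?_, ?_⟩ <;>
    simp only [Δ, g, h_a, h_b, h_zero_zero_inj] <;> ring

theorem eq_g_mul_of_mulR_g_g {u v : Heis F} (hΔ : Δ u v ≠ 0) {α β : F} {z : Heis F}
    (hz : MulR u v (g u v α) (g u v β) z) : z = g u v (α * β) := by
  obtain ⟨x', y', hx'u, -, hx'v, huy', rfl⟩ := (mulR_g_g_iff u v α β z).1 hz
  have key : Δ x' y' * Δ u v = α * β * Δ u v * Δ u v := by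
    rw [Δ_mul_Δ_eq, hx'u, hx'v, huy']; ring
  rw [g, h_zero_zero_inj, mul_right_cancel₀ hΔ key]

theorem g_mem_center (u v : Heis F) (α : F) : g u v α ∈ Subgroup.center (Heis F) :=
  mem_center_iff.2 ⟨rfl, rfl⟩

theorem g_add (u v : Heis F) (α β : F) : g u v (α + β) = g u v α * g u v β := by
  ext <;> simp only [g, h_a, h_b, h_c, mul_a, mul_b, mul_c] <;> ring

theorem g_injective {u v : Heis F} (hΔ : Δ u v ≠ 0) : Function.Injective (g u v) := fun _ _ hαβ =>
  mul_right_cancel₀ hΔ (h_zero_zero_inj.1 hαβ)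

theorem g_div_Δ_of_mem_center {u v x : Heis F} (hΔ : Δ u v ≠ 0)
    (hx : x ∈ Subgroup.center (Heis F)) : g u v (x.c / Δ u v) = x := by
  obtain ⟨ha, hb⟩ := mem_center_iff.1 hx
  ext <;> simp [g, ha, hb, hΔ]

end Heis

open Heis

/-- `⊗` (given by `MulR`) is a well-defined binary operation on the center,
and `α ↦ h 0 0 (α·Δ)` is a field isomorphism from `F` onto the center with
matrix multiplication as addition and `⊗` as multiplication. -/
theorem heis_maltsev_field_iso (F : Type*) [Field F] (u v : Heis F)
    (huv : u * v ≠ v * u) :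
    (∀ x ∈ Subgroup.center (Heis F), ∀ y ∈ Subgroup.center (Heis F),
      ∃! z, z ∈ Subgroup.center (Heis F) ∧ MulR u v x y z) ∧
    (∀ α : F, g u v α ∈ Subgroup.center (Heis F)) ∧
    Function.Injective (g u v (F := F)) ∧
    (∀ x ∈ Subgroup.center (Heis F), ∃ α : F, g u v α = x) ∧
    (∀ α β : F, g u v (α + β) = g u v α * g u v β) ∧
    (∀ α β : F, MulR u v (g u v α) (g u v β) (g u v (α * β))) := by
  have hΔ : Δ u v ≠ 0 := mt mul_comm_iff_Δ_eq_zero.2 huv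
  refine ⟨?_, g_mem_center u v, g_injective hΔ, fun x hx => ⟨_, g_div_Δ_of_mem_center hΔ hx⟩,
    g_add u v, mulR_g_g u v⟩
  intro x hx y hy
  rw [← g_div_Δ_of_mem_center hΔ hx, ← g_div_Δ_of_mem_center hΔ hy]
  exact ⟨_, ⟨g_mem_center u v _, mulR_g_g u v _ _⟩,
    fun z hz => eq_g_mul_of_mulR_g_g hΔ hz.2⟩
end

section
/- Let F be a field with non-commuting pairs (u,v) and (u',v') in H(F). For x in Z(H(F)), the element f_{(u,v),(u',v')}(x) (defined as g_{(u',v')}(g_{(u,v)}⁻¹(x)), where g_{(u,v)}(α) = h(0,0,α·Δ_{(u,v)})) equals x ⊗_{(u,v)} h(0,0,Δ_{(u',v')}), where ⊗_{(u,v)} is the Maltsev multiplication on Z(H(F)) with parameters (u,v). -/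
namespace HeisAux
open Heis
variable {F : Type*} [Field F]

theorem comm_eq (p q : Heis F) : p⁻¹ * q⁻¹ * p * q = ⟨0, 0, Δ p q⟩ := by
  ext <;> simp [Δ] <;> ring

theorem delta_ne {u v : Heis F} (huv : u * v ≠ v * u) :
    u.a * v.b - u.b * v.a ≠ 0 := by
  intro hΔ
  apply huv
  ext
  · simp; ring
  · simp; ring
  · simp only [Heis.mul_c]; linear_combination hΔ

theorem center_ab {x : Heis F} (hx : x ∈ Subgroup.center (Heis F)) :
    x.a = 0 ∧ x.b = 0 := by
  rw [Subgroup.mem_center_iff] at hx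
  have h1 := congrArg Heis.c (hx ⟨1, 0, 0⟩)
  have h2 := congrArg Heis.c (hx ⟨0, 1, 0⟩)
  simp at h1 h2
  exact ⟨h2, h1⟩

end HeisAux

open HeisAux

open Heis
/-- For `x` central, `f_{(u,v),(u',v')}(x)` equals `x ⊗_{(u,v)} h 0 0 (Δ u' v')`,
where `⊗_{(u,v)}` is the Maltsev multiplication with parameters `(u,v)`. -/
theorem heis_f_eq_mul_one' (F : Type*) [Field F] (u v u' v' : Heis F)
    (huv : u * v ≠ v * u) (huv' : u' * v' ≠ v' * u') :
    ∀ x ∈ Subgroup.center (Heis F),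
      MulR u v x (h 0 0 (Δ u' v')) (f u v u' v' x) ∧
      (∀ z ∈ Subgroup.center (Heis F),
        MulR u v x (h 0 0 (Δ u' v')) z → z = f u v u' v' x) := by
  intro x hx
  obtain ⟨hxa, hxb⟩ := center_ab hx
  have hΔ : u.a * v.b - u.b * v.a ≠ 0 := delta_ne huv
  constructor
  · refine ⟨⟨(x.c / Δ u v) * u.a, (x.c / Δ u v) * u.b, 0⟩,
      ⟨(Δ u' v' / Δ u v) * v.a, (Δ u' v' / Δ u v) * v.b, 0⟩, ?_, ?_, ?_, ?_, ?_⟩ <;>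
      rw [comm_eq] <;> ext <;>
      simp only [Heis.h, Heis.f, Heis.g, Heis.Δ, hxa, hxb, Heis.one_a, Heis.one_b,
        Heis.one_c] <;>
      field_simp <;> ring
  · rintro z hz ⟨x', y', h1, h2, h3, h4, h5⟩
    rw [comm_eq] at h1 h3 h4 h5
    have e1 := congrArg Heis.c h1
    have e3 := congrArg Heis.c h3
    have e4 := congrArg Heis.c h4
    simp only [Heis.Δ, Heis.h, Heis.one_c] at e1 e3 e4
    have key : (x'.a * y'.b - x'.b * y'.a) * (u.a * v.b - u.b * v.a)
        = x.c * (u'.a * v'.b - u'.b * v'.a) := by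
      linear_combination e3 * (u.a * y'.b - u.b * y'.a) + x.c * e4
        - (v.a * y'.b - v.b * y'.a) * e1
    rw [← h5]
    ext
    · simp [Heis.f, Heis.g, Heis.h]
    · simp [Heis.f, Heis.g, Heis.h]
    · simp only [Heis.f, Heis.g, Heis.h, Heis.Δ]
      field_simp
      linear_combination key
end

section
/- Let F be a field. Define D = {(u,v,x) ∈ H(F)³ : uv ≠ vu, xu = ux, xv = vx}, and define (u,v,x) ∼ (u',v',x') iff f_{(u,v),(u',v')}(x) = x' (where f is the canonical isomorphism between the Maltsev copies of F). Then ∼ is an equivalence relation on D. -/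
open Heis
/-- On the domain `D = {(u,v,x) : uv ≠ vu, x central}`, the relation
`(u,v,x) ∼ (u',v',x') ↔ f_{(u,v),(u',v')}(x) = x'` is an equivalence relation. -/
theorem heis_sim_equivalence (F : Type*) [Field F] :
    let D : Set (Heis F × Heis F × Heis F) :=
      {t | t.1 * t.2.1 ≠ t.2.1 * t.1 ∧ t.2.2 * t.1 = t.1 * t.2.2 ∧
        t.2.2 * t.2.1 = t.2.1 * t.2.2}
    let R : (Heis F × Heis F × Heis F) → (Heis F × Heis F × Heis F) → Prop :=
      fun t s => f t.1 t.2.1 s.1 s.2.1 t.2.2 = s.2.2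
    (∀ t ∈ D, R t t) ∧
    (∀ t ∈ D, ∀ s ∈ D, R t s → R s t) ∧
    (∀ t ∈ D, ∀ s ∈ D, ∀ w ∈ D, R t s → R s w → R t w) := by
  intro D R
  have key : ∀ t ∈ D, Δ t.1 t.2.1 ≠ 0 ∧ t.2.2.a = 0 ∧ t.2.2.b = 0 := by
    rintro ⟨u, v, x⟩ ⟨h1, h2, h3⟩
    dsimp only at h1 h2 h3 ⊢
    have hΔ : Δ u v ≠ 0 := by
      intro hd
      apply h1
      unfold Δ at hd
      ext
      · exact add_comm _ _
      · exact add_comm _ _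
      · show u.c + v.c + u.a * v.b = v.c + u.c + v.a * u.b
        linear_combination hd
    have hxu : x.a * u.b = u.a * x.b := by
      have := congrArg Heis.c h2; simp at this; linear_combination this
    have hxv : x.a * v.b = v.a * x.b := by
      have := congrArg Heis.c h3; simp at this; linear_combination this
    refine ⟨hΔ, ?_, ?_⟩
    · have h0 : x.a * Δ u v = 0 := by unfold Δ; linear_combination u.a * hxv - v.a * hxu
      exact (mul_eq_zero.mp h0).resolve_right hΔ
    · have h0 : x.b * Δ u v = 0 := by unfold Δ; linear_combination u.b * hxv - v.b * hxu
      exact (mul_eq_zero.mp h0).resolve_right hΔ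
  refine ⟨?_, ?_, ?_⟩
  · rintro ⟨u, v, x⟩ ht
    obtain ⟨hΔ, ha, hb⟩ := key _ ht
    dsimp only at hΔ ha hb
    show f u v u v x = x
    ext <;> simp [f, g, h, ha, hb, div_mul_cancel₀ _ hΔ]
  · rintro ⟨u, v, x⟩ ht ⟨u', v', x'⟩ hs hr
    obtain ⟨hΔ, ha, hb⟩ := key _ ht
    obtain ⟨hΔ', -, -⟩ := key _ hs
    dsimp only at hΔ ha hb hΔ' ⊢
    have hr' : f u v u' v' x = x' := hr
    show f u' v' u v x' = x
    rw [← hr']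
    ext <;> simp [f, g, h, ha, hb] <;> field_simp <;> ring
  · rintro ⟨u, v, x⟩ ht ⟨u', v', x'⟩ hs ⟨u'', v'', x''⟩ hw hr1 hr2
    obtain ⟨hΔ, ha, hb⟩ := key _ ht
    obtain ⟨hΔ', -, -⟩ := key _ hs
    dsimp only at hΔ ha hb hΔ' ⊢
    have h1' : f u v u' v' x = x' := hr1
    have h2' : f u' v' u'' v'' x' = x'' := hr2
    show f u v u'' v'' x = x''
    rw [← h2', ← h1']
    ext <;> simp [f, g, h] <;> rw [mul_div_assoc, div_self hΔ', mul_one] <;> exact Or.inl rfl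
end

section
/- For any field F with a non-commuting pair (u,v) in H(F), the element h(0,0,Δ_{(u,v)}) is a multiplicative identity for the Maltsev multiplication ⊗_{(u,v)} on Z(H(F)): for every x ∈ Z(H(F)), x ⊗_{(u,v)} h(0,0,Δ_{(u,v)}) = x. -/
namespace Heis

variable {F : Type*} [Field F]

theorem commutator_eq_h (p q : Heis F) :
    p⁻¹ * q⁻¹ * p * q = h 0 0 (p.a * q.b - p.b * q.a) := by
  ext <;> simp
  ring

theorem eq_h_of_mem_center {x : Heis F} (hx : x ∈ Subgroup.center (Heis F)) :
    x = h 0 0 x.c := by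
  rw [Subgroup.mem_center_iff] at hx
  have hxa : x.a = 0 := by simpa using congrArg c (hx (h 0 1 0))
  have hxb : x.b = 0 := by simpa using (congrArg c (hx (h 1 0 0))).symm
  ext <;> simp [hxa, hxb]

theorem Δ_ne_zero {u v : Heis F} (huv : u * v ≠ v * u) : Δ u v ≠ 0 := by
  intro hΔ
  apply huv
  ext
  · simp [add_comm]
  · simp [add_comm]
  · simp only [mul_c]
    unfold Δ at hΔ
    linear_combination hΔ

/-- Witnesses: `x' = (c / Δ) • u` and `y' = (d / Δ) • v` on the superdiagonal entries. -/
theorem mulR_h {u v : Heis F} (hΔ : Δ u v ≠ 0) (c d : F) :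
    MulR u v (h 0 0 c) (h 0 0 d) (h 0 0 (c * d / Δ u v)) := by
  refine ⟨h (c / Δ u v * u.a) (c / Δ u v * u.b) 0, h (d / Δ u v * v.a) (d / Δ u v * v.b) 0,
    ?_, ?_, ?_, ?_, ?_⟩ <;> rw [commutator_eq_h] <;> unfold Δ at * <;> ext <;> simp <;>
    field_simp <;> ring

/-- On corners, the Plücker identity `[x',y'] Δ = [x',v] [u,y'] - [x',u] [v,y']` in the plane
of superdiagonal entries; the second term vanishes since `[x',u] = 1`. -/
theorem MulR.c_mul_Δ {u v x y z : Heis F} (hxyz : MulR u v x y z) :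
    z.c * Δ u v = x.c * y.c := by
  obtain ⟨x', y', hx'u, -, hx'v, huy', hx'y'⟩ := hxyz
  simp only [commutator_eq_h] at hx'u hx'v huy' hx'y'
  have e1 := congrArg c hx'u
  rw [← hx'v, ← huy', ← hx'y']
  simp only [h_c, one_c] at e1 ⊢
  unfold Δ
  linear_combination (y'.a * v.b - y'.b * v.a) * e1

end Heis

open Heis

/-- `h 0 0 (Δ u v)` is a multiplicative identity for the Maltsev
multiplication `⊗_{(u,v)}` on the center: `x ⊗ h 0 0 (Δ u v) = x`. -/
theorem heis_maltsev_one (F : Type*) [Field F] (u v : Heis F)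
    (huv : u * v ≠ v * u) :
    ∀ x ∈ Subgroup.center (Heis F),
      MulR u v x (h 0 0 (Δ u v)) x ∧
      (∀ z ∈ Subgroup.center (Heis F), MulR u v x (h 0 0 (Δ u v)) z → z = x) := by
  have hΔ := Δ_ne_zero huv
  intro x hx
  have hx_eq := eq_h_of_mem_center hx
  constructor
  · have hxΔ := mulR_h hΔ x.c (Δ u v)
    rwa [mul_div_cancel_right₀ _ hΔ, ← hx_eq] at hxΔ
  · intro z hz hxz
    have hzΔ : z.c * Δ u v = x.c * Δ u v := hxz.c_mul_Δ
    rw [eq_h_of_mem_center hz, hx_eq, mul_right_cancel₀ hΔ hzΔ]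
end
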